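/- arXiv:0808.0487 — 2 statements merged into one kernel-verified Lean document; each statement's English description precedes it below -/
import Mathlib

section
/- For every x ∈ [0,1) and all k, l ∈ ℕ, wal_k(x) · conj(wal_l(x)) = wal_{k ⊖ l}(x), where k ⊖ l denotes digitwise subtraction of base-p digits modulo p. -/
open scoped BigOperators

/-- `ω_p = exp(2πi/p)`. -/
noncomputable def omega (p : ℕ) : ℂ := Complex.exp (2 * Real.pi * Complex.I / p)

/-- The `i`-th base-`p` digit of the natural number `n` (starting from `i = 0`). -/
def ndigit (p n i : ℕ) : ℕ := (n / p ^ i) % p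

/-- The `i`-th base-`p` digit of the real number `x` (starting from `i = 1`):
`x_i = ⌊p^i x⌋ mod p`. -/
noncomputable def xdigit (p : ℕ) (x : ℝ) (i : ℕ) : ℕ := (⌊(p : ℝ) ^ i * x⌋).toNat % p

/-- The base-`p` Walsh function `wal_k(x) = ω_p^{x_1 k_0 + x_2 k_1 + ⋯}`
(the digits of `k` vanish beyond index `k`, so the sum below is the full series). -/
noncomputable def wal (p k : ℕ) (x : ℝ) : ℂ :=
  omega p ^ (∑ i ∈ Finset.range (k + 1), xdigit p x (i + 1) * ndigit p k i)

/-- Multivariate Walsh function `wal_k(x) = ∏_j wal_{k_j}(x_j)`. -/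
noncomputable def walS (p s : ℕ) (k : Fin s → ℕ) (x : Fin s → ℝ) : ℂ :=
  ∏ j, wal p (k j) (x j)

/-- The vector of the first `m` base-`p` digits of `n`, viewed in `ℤ_p^m`. -/
def nvec (p m : ℕ) (n : ℕ) : Fin m → ZMod p := fun i => (ndigit p n i : ZMod p)

/-- The `n`-th point of the digital net generated by matrices `C = (C_1,…,C_s)`:
`x_{j,n} = Σ_{i=1}^m y_{j,n,i} p^{-i}` where `y⃗_{j,n} = C_j n⃗`. -/
noncomputable def netPoint (p s m : ℕ) (C : Fin s → Matrix (Fin m) (Fin m) (ZMod p)) (n : ℕ) :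
    Fin s → ℝ :=
  fun j => ∑ i : Fin m, ((Matrix.mulVec (C j) (nvec p m n)) i).val / (p : ℝ) ^ (i.val + 1)

/-- `C·k = C_1ᵀ k⃗_1^{(m)} + ⋯ + C_sᵀ k⃗_s^{(m)} ∈ ℤ_p^m`. -/
def Cdot (p s m : ℕ) (C : Fin s → Matrix (Fin m) (Fin m) (ZMod p)) (k : Fin s → ℕ) :
    Fin m → ZMod p :=
  ∑ j, Matrix.mulVec (Matrix.transpose (C j)) (nvec p m (k j))

/-- Digitwise addition modulo `p` of base-`p` digits: `k ⊕ l`. -/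
def dadd (p k l : ℕ) : ℕ :=
  ∑ i ∈ Finset.range (k + l + 1), ((ndigit p k i + ndigit p l i) % p) * p ^ i

/-- Digitwise subtraction modulo `p` of base-`p` digits: `k ⊖ l`. -/
def dsub (p k l : ℕ) : ℕ :=
  ∑ i ∈ Finset.range (k + l + 1), ((ndigit p k i + (p - ndigit p l i)) % p) * p ^ i

/-! Since `ω_p ^ n` only depends on `n mod p`, each Walsh function is the standard additive
character `ψ` of `ZMod p` evaluated at `∑ x_{i+1} k_i`. Then `conj ∘ ψ = ψ ∘ neg` turns the
left-hand side into `ψ (∑ x_{i+1} (k_i - l_i))`, and `k_i - l_i` is the `i`-th digit of `k ⊖ l`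
modulo `p`. -/

open ZMod

lemma omega_pow_eq_stdAddChar (p : ℕ) [NeZero p] (n : ℕ) :
    omega p ^ n = stdAddChar (n : ZMod p) := by
  rw [omega, ← Complex.exp_nat_mul, ← Int.cast_natCast (R := ZMod p), stdAddChar_coe]
  congr 1
  push_cast
  ring

lemma ndigit_eq_zero_of_lt {p n i : ℕ} (hp : 1 < p) (h : n < i) : ndigit p n i = 0 := by
  rw [ndigit, Nat.div_eq_of_lt (h.trans (Nat.lt_pow_self hp)), Nat.zero_mod]

lemma ndigit_add_mul_zero {p a : ℕ} (ha : a < p) (n : ℕ) : ndigit p (a + p * n) 0 = a := by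
  rw [ndigit, pow_zero, Nat.div_one, Nat.add_mul_mod_self_left, Nat.mod_eq_of_lt ha]

lemma ndigit_add_mul_succ {p a : ℕ} (ha : a < p) (n j : ℕ) :
    ndigit p (a + p * n) (j + 1) = ndigit p n j := by
  rw [ndigit, ndigit, pow_succ', ← Nat.div_div_eq_div_mul,
    Nat.add_mul_div_left _ _ (by omega : 0 < p), Nat.div_eq_of_lt ha, zero_add]

lemma ndigit_sum_mul_pow {p : ℕ} {c : ℕ → ℕ} (hc : ∀ i, c i < p) (N j : ℕ) :
    ndigit p (∑ i ∈ Finset.range N, c i * p ^ i) j = if j < N then c j else 0 := by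
  induction N generalizing c j with
  | zero => simp [ndigit]
  | succ N ih =>
    have hsplit : ∑ i ∈ Finset.range (N + 1), c i * p ^ i =
        c 0 + p * ∑ i ∈ Finset.range N, c (i + 1) * p ^ i := by
      rw [Finset.sum_range_succ', Finset.mul_sum, pow_zero, mul_one, add_comm]
      exact congrArg (c 0 + ·) (Finset.sum_congr rfl fun i _ => by ring)
    rw [hsplit]
    cases j with
    | zero => simp [ndigit_add_mul_zero (hc 0)]
    | succ j =>
      rw [ndigit_add_mul_succ (hc 0), ih (fun i => hc (i + 1))]
      simp

lemma natCast_ndigit_dsub {p : ℕ} (hp : 1 < p) (k l i : ℕ) :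
    (ndigit p (dsub p k l) i : ZMod p) = ndigit p k i - ndigit p l i := by
  have hl : ndigit p l i ≤ p := (Nat.mod_lt _ (by omega)).le
  rw [dsub, ndigit_sum_mul_pow (fun _ => Nat.mod_lt _ (by omega))]
  split_ifs with hi
  · push_cast [ZMod.natCast_mod, Nat.cast_sub hl, ZMod.natCast_self]
    ring
  · rw [ndigit_eq_zero_of_lt hp (by omega : k < i), ndigit_eq_zero_of_lt hp (by omega : l < i)]
    simp

lemma wal_eq_stdAddChar {p : ℕ} [NeZero p] (hp : 1 < p) (x : ℝ) {n M : ℕ} (hM : n < M) :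
    wal p n x = stdAddChar
      (∑ i ∈ Finset.range M, (xdigit p x (i + 1) : ZMod p) * (ndigit p n i : ZMod p)) := by
  rw [wal, omega_pow_eq_stdAddChar]
  push_cast
  congr 1
  refine Finset.sum_subset (Finset.range_subset_range.2 hM) fun i _ hi => ?_
  rw [ndigit_eq_zero_of_lt hp (by simpa using hi), Nat.cast_zero, mul_zero]

theorem statement1_general (p : ℕ) (hp : p.Prime) (x : ℝ) (k l : ℕ) :
    wal p k x * (starRingEnd ℂ) (wal p l x) = wal p (dsub p k l) x := by
  have : NeZero p := ⟨hp.ne_zero⟩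
  have hp1 := hp.one_lt
  set M := k + l + dsub p k l + 1
  rw [wal_eq_stdAddChar hp1 x (by omega : k < M), wal_eq_stdAddChar hp1 x (by omega : l < M),
    wal_eq_stdAddChar hp1 x (by omega : dsub p k l < M), ← AddChar.map_neg_eq_conj,
    ← AddChar.map_add_eq_mul, ← sub_eq_add_neg, ← Finset.sum_sub_distrib]
  simp only [natCast_ndigit_dsub hp1, mul_sub]

/-- `wal_k(x) ⋅ conj(wal_l(x)) = wal_{k ⊖ l}(x)`. -/
theorem statement1 (p : ℕ) (hp : p.Prime) (x : ℝ) (hx0 : 0 ≤ x) (hx1 : x < 1) (k l : ℕ) :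
    wal p k x * (starRingEnd ℂ) (wal p l x) = wal p (dsub p k l) x :=
  statement1_general p hp x k l
end

section
/- Let x_n be the n-th point of the digital net P(C) and let k ∈ ℕ^s with C·k = h⃗ ∈ ℤ_p^m. Then wal_k(x_n) = ω_p^{n_0 h_0 + ⋯ + n_{m−1} h_{m−1}}, where n⃗ = (n_0,…,n_{m−1}) is the vector of base-p digits of n and the exponent is computed via representatives in {0,…,p−1} of the products in ℤ_p. -/
open scoped BigOperators

/-!
Each coordinate `x_{j,n}` has exactly the `m` base-`p` digits `C_j n⃗`, since multiplying by `p`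
shifts the expansion one place. Hence `wal_{k_j}(x_{j,n}) = ω_p^{(C_j n⃗) ⬝ k⃗_j}`; the exponent
only matters modulo `p`, and `∑_j (C_j n⃗) ⬝ k⃗_j = n⃗ ⬝ (∑_j C_jᵀ k⃗_j) = n⃗ ⬝ h⃗`.
-/

open Finset Matrix

lemma omega_pow_eq_pow_of_natCast_eq {p : ℕ} (hp : p ≠ 0) {a b : ℕ}
    (h : (a : ZMod p) = b) : omega p ^ a = omega p ^ b := by
  have hω : IsPrimitiveRoot (omega p) p := Complex.isPrimitiveRoot_exp p hp
  rw [(hω.isOfFinOrder hp).pow_eq_pow_iff_modEq, ← hω.eq_orderOf]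
  exact (ZMod.natCast_eq_natCast_iff a b p).mp h

lemma ndigit_eq_zero_of_lt_pow {p n i : ℕ} (h : n < p ^ i) : ndigit p n i = 0 := by
  rw [ndigit, Nat.div_eq_of_lt h, Nat.zero_mod]

lemma Finset.sum_range_eq_sum_range_of_eq_zero {M : Type*} [AddCommMonoid M] {f : ℕ → M}
    {a b : ℕ} (hf : ∀ i, min a b ≤ i → f i = 0) :
    ∑ i ∈ range a, f i = ∑ i ∈ range b, f i := by
  have key : ∀ c, min a b ≤ c → ∑ i ∈ range c, f i = ∑ i ∈ range (min a b), f i :=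
    fun c hc => (sum_subset (range_subset_range.mpr hc)
      fun i _ hi => hf i (not_lt.mp (mt mem_range.mpr hi))).symm
  rw [key a (min_le_left a b), key b (min_le_right a b)]

noncomputable def ofFinDigits (p : ℕ) {m : ℕ} (y : Fin m → ℕ) : ℝ :=
  ∑ i, (y i : ℝ) / (p : ℝ) ^ (i.val + 1)

section ofFinDigits

variable {p : ℕ}

lemma ofFinDigits_zero (y : Fin 0 → ℕ) : ofFinDigits p y = 0 := by
  simp [ofFinDigits]

lemma ofFinDigits_succ {m : ℕ} (y : Fin (m + 1) → ℕ) :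
    ofFinDigits p y = (y 0 + ofFinDigits p (Fin.tail y)) / p := by
  simp only [ofFinDigits, Fin.sum_univ_succ, Fin.tail, Fin.val_zero, Fin.val_succ, add_div,
    sum_div, pow_succ, div_div, pow_zero, one_mul]

lemma ofFinDigits_nonneg {m : ℕ} (y : Fin m → ℕ) : 0 ≤ ofFinDigits p y := by
  unfold ofFinDigits; positivity

lemma ofFinDigits_lt_one (hp : 0 < p) {m : ℕ} (y : Fin m → ℕ) (hy : ∀ i, y i < p) :
    ofFinDigits p y < 1 := by
  induction m with
  | zero => simp [ofFinDigits_zero]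
  | succ m ih =>
    have hp' : (0 : ℝ) < p := by exact_mod_cast hp
    have hy0 : (y 0 : ℝ) + 1 ≤ p := by exact_mod_cast hy 0
    rw [ofFinDigits_succ, div_lt_one hp']
    linarith [ih (Fin.tail y) fun i => hy i.succ]

/-- The digits of `(d + x) / p` are `d` followed by the digits of `x`. -/
lemma xdigit_add_div (hp : 0 < p) (d : ℕ) {x : ℝ} (hx : 0 ≤ x) (i : ℕ) :
    xdigit p ((d + x) / p) (i + 1) = (d * p ^ i + (⌊(p : ℝ) ^ i * x⌋).toNat) % p := by
  have hp' : (p : ℝ) ≠ 0 := by exact_mod_cast hp.ne'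
  have hshift : (p : ℝ) ^ (i + 1) * ((d + x) / p) = ((d * p ^ i : ℕ) : ℝ) + (p : ℝ) ^ i * x := by
    push_cast; field_simp; ring
  rw [xdigit, hshift, Int.floor_natCast_add, add_comm, Int.toNat_add_nat (by positivity),
    add_comm]

lemma xdigit_ofFinDigits (hp : 1 < p) {m : ℕ} (y : Fin m → ℕ) (hy : ∀ i, y i < p) (i : ℕ) :
    xdigit p (ofFinDigits p y) (i + 1) = if h : i < m then y ⟨i, h⟩ else 0 := by
  induction m generalizing i with
  | zero => simp [ofFinDigits_zero, xdigit]
  | succ m ih =>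
    have htail := ofFinDigits_nonneg (p := p) (Fin.tail y)
    rw [ofFinDigits_succ, xdigit_add_div (by omega) _ htail]
    cases i with
    | zero =>
      have hfloor : ⌊ofFinDigits p (Fin.tail y)⌋ = 0 := Int.floor_eq_zero_iff.mpr
        ⟨htail, ofFinDigits_lt_one (by omega) _ fun i => hy i.succ⟩
      simp [hfloor, Nat.mod_eq_of_lt (hy 0)]
    | succ i =>
      rw [pow_succ, ← mul_assoc, Nat.mul_add_mod_self_right, ← xdigit,
        ih (Fin.tail y) (fun i => hy i.succ) i]
      simp [Fin.tail]

lemma wal_ofFinDigits (hp : 1 < p) {m : ℕ} {y : Fin m → ℕ} (hy : ∀ i, y i < p) (k : ℕ) :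
    wal p k (ofFinDigits p y) = omega p ^ ∑ i, y i * ndigit p k i := by
  have hfin : ∑ i, y i * ndigit p k i =
      ∑ i ∈ range m, (if h : i < m then y ⟨i, h⟩ else 0) * ndigit p k i := by
    rw [← Fin.sum_univ_eq_sum_range]
    simp
  rw [wal, hfin]
  congr 1
  simp_rw [xdigit_ofFinDigits hp y hy]
  refine sum_range_eq_sum_range_of_eq_zero fun i hi => ?_
  rcases min_le_iff.mp hi with hk | hm
  · rw [ndigit_eq_zero_of_lt_pow ((Nat.lt_of_succ_le hk).trans (Nat.lt_pow_self hp)), mul_zero]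
  · rw [dif_neg (by omega), zero_mul]

end ofFinDigits

lemma netPoint_eq_ofFinDigits (p s m : ℕ) (C : Fin s → Matrix (Fin m) (Fin m) (ZMod p))
    (n : ℕ) (j : Fin s) :
    netPoint p s m C n j = ofFinDigits p fun i => (C j *ᵥ nvec p m n) i |>.val := rfl

lemma dotProduct_Cdot {p s m : ℕ} (C : Fin s → Matrix (Fin m) (Fin m) (ZMod p))
    (k : Fin s → ℕ) (v : Fin m → ZMod p) :
    v ⬝ᵥ Cdot p s m C k = ∑ j, (C j *ᵥ v) ⬝ᵥ nvec p m (k j) := by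
  simp only [Cdot, dotProduct_sum, dotProduct_mulVec, vecMul_transpose]

lemma natCast_sum_val_mul_ndigit {p m : ℕ} [NeZero p] (y : Fin m → ZMod p) (k : ℕ) :
    ((∑ i, (y i).val * ndigit p k i : ℕ) : ZMod p) = y ⬝ᵥ nvec p m k := by
  push_cast [ZMod.natCast_val, ZMod.cast_id']
  rfl

theorem statement2_general (p s m : ℕ) [Fact p.Prime]
    (C : Fin s → Matrix (Fin m) (Fin m) (ZMod p)) (n : ℕ)
    (k : Fin s → ℕ) (h : Fin m → ZMod p) (hh : Cdot p s m C k = h) :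
    walS p s k (netPoint p s m C n) = omega p ^ (∑ i, nvec p m n i * h i).val := by
  have hp : 1 < p := (Fact.out : p.Prime).one_lt
  calc walS p s k (netPoint p s m C n)
      = ∏ j, omega p ^ ∑ i, ((C j *ᵥ nvec p m n) i).val * ndigit p (k j) i := by
        refine prod_congr rfl fun j _ => ?_
        rw [netPoint_eq_ofFinDigits, wal_ofFinDigits hp fun i => ZMod.val_lt _]
    _ = omega p ^ ∑ j, ∑ i, ((C j *ᵥ nvec p m n) i).val * ndigit p (k j) i :=
        prod_pow_eq_pow_sum _ _ _
    _ = omega p ^ (∑ i, nvec p m n i * h i).val := by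
        refine omega_pow_eq_pow_of_natCast_eq (by omega) ?_
        rw [ZMod.natCast_zmod_val, Nat.cast_sum, ← hh]
        simp only [natCast_sum_val_mul_ndigit]
        exact (dotProduct_Cdot C k (nvec p m n)).symm

/-- `wal_k(x_n) = ω_p^{n⃗ ⋅ h⃗}` where `h⃗ = C·k`. -/
theorem statement2 (p s m : ℕ) [Fact p.Prime] (hs : 1 ≤ s) (hm : 1 ≤ m)
    (C : Fin s → Matrix (Fin m) (Fin m) (ZMod p)) (n : ℕ) (hn : n < p ^ m)
    (k : Fin s → ℕ) (h : Fin m → ZMod p) (hh : Cdot p s m C k = h) :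
    walS p s k (netPoint p s m C n) = omega p ^ (∑ i, nvec p m n i * h i).val :=
  statement2_general p s m C n k h hh
end
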